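/- arXiv:1504.07221 — 4 statements merged into one kernel-verified Lean document; each statement's English description precedes it below -/
import Mathlib

section
/- The bilinear map [M₁,M₂]_A := M₁AM₂ - M₂AM₁ on so(n), for a fixed symmetric matrix A, satisfies the Jacobi identity and maps pairs of skew-symmetric matrices to skew-symmetric matrices; hence (so(n), [·,·]_A) is a Lie algebra. -/
open Matrix

/-- For a fixed symmetric matrix `A`, the bilinear bracket `[X,Y]_A = XAY - YAX` maps
pairs of skew-symmetric matrices to skew-symmetric matrices and satisfies the Jacobi
identity; hence `(so(n), [·,·]_A)` is a Lie algebra. -/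
theorem bracketA_skew_and_jacobi (n : ℕ) (A : Matrix (Fin n) (Fin n) ℝ) (hA : Aᵀ = A) :
    (∀ X Y : Matrix (Fin n) (Fin n) ℝ, Xᵀ = -X → Yᵀ = -Y →
      (X * A * Y - Y * A * X)ᵀ = -(X * A * Y - Y * A * X)) ∧
    (∀ X Y Z : Matrix (Fin n) (Fin n) ℝ, Xᵀ = -X → Yᵀ = -Y → Zᵀ = -Z →
      ((X * A * Y - Y * A * X) * A * Z - Z * A * (X * A * Y - Y * A * X)) +
      ((Y * A * Z - Z * A * Y) * A * X - X * A * (Y * A * Z - Z * A * Y)) +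
      ((Z * A * X - X * A * Z) * A * Y - Y * A * (Z * A * X - X * A * Z)) = 0) := by
  constructor
  · intro X Y hX hY
    simp [Matrix.transpose_mul, hA, hX, hY, Matrix.mul_assoc]
  · intro X Y Z _ _ _
    noncomm_ring
end

section
/- Let A = diag(a₁,…,aₙ) with a₁,…,aₙ pairwise distinct. Then for any λ ∈ ℝ, λ ≠ 0, and any M ∈ so(n), the gradient of f_λ,k(M) = tr((M+λA)^k) with respect to ⟨X,Y⟩ = -½tr(XY) is a polynomial matrix expression, and the functions tr(M²) and tr(M²A + MAM + AM²) Poisson-commute with respect to the Lie-Poisson bracket {f,g}(M) = -⟨M,[∇f,∇g]⟩ on so(n). -/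
open Matrix

private lemma deriv_quad (a b c : ℝ) :
    deriv (fun t : ℝ => a + b * t + c * t ^ 2) 0 = b := by
  have h : HasDerivAt (fun t : ℝ => a + b * t + c * t ^ 2)
      (b * 1 + c * (↑2 * 0 ^ 1)) 0 := by
    exact ((((hasDerivAt_id (0:ℝ)).const_mul b).const_add a)).add
      ((hasDerivAt_pow 2 (0:ℝ)).const_mul c)
  simpa using h.deriv

/-- Let `A = diag(a₁,…,aₙ)` with pairwise distinct entries. With respect to the pairing
`⟨X,Y⟩ = -½tr(XY)`, the gradients of `tr(M²)` and of
`p¹₁(M) = tr(M²A + MAM + AM²)` are the matrix polynomial expressions `-4M` and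
`-6(MA + AM)` respectively (stated via directional derivatives), and these two functions
Poisson-commute with respect to the Lie-Poisson bracket
`{f,g}(M) = -⟨M,[∇f(M),∇g(M)]⟩` on `so(n)`. -/
theorem manakov_low_order_commute (n : ℕ) (a : Fin n → ℝ)
    (ha : Function.Injective a) :
    (∀ M X : Matrix (Fin n) (Fin n) ℝ,
      deriv (fun t : ℝ => Matrix.trace ((M + t • X) ^ 2)) 0 =
        -(1 / 2 : ℝ) * Matrix.trace (((-4 : ℝ) • M) * X)) ∧
    (∀ M X : Matrix (Fin n) (Fin n) ℝ,
      deriv (fun t : ℝ =>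
          Matrix.trace ((M + t • X) ^ 2 * Matrix.diagonal a
            + (M + t • X) * Matrix.diagonal a * (M + t • X)
            + Matrix.diagonal a * (M + t • X) ^ 2)) 0 =
        -(1 / 2 : ℝ) *
          Matrix.trace (((-6 : ℝ) • (M * Matrix.diagonal a + Matrix.diagonal a * M)) * X)) ∧
    (∀ M : Matrix (Fin n) (Fin n) ℝ, Mᵀ = -M →
      -(-(1 / 2 : ℝ) *
        Matrix.trace (M *
          (((-4 : ℝ) • M) * ((-6 : ℝ) • (M * Matrix.diagonal a + Matrix.diagonal a * M))
            - ((-6 : ℝ) • (M * Matrix.diagonal a + Matrix.diagonal a * M)) *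
              ((-4 : ℝ) • M)))) = 0) := by
  set A := Matrix.diagonal a with hA
  refine ⟨?_, ?_, ?_⟩
  · intro M X
    have hf : (fun t : ℝ => Matrix.trace ((M + t • X) ^ 2)) =
        fun t : ℝ => Matrix.trace (M * M) +
          (Matrix.trace (M * X) + Matrix.trace (X * M)) * t +
          Matrix.trace (X * X) * t ^ 2 := by
      funext t
      simp only [pow_two, add_mul, mul_add, Matrix.smul_mul, Matrix.mul_smul,
        smul_smul, Matrix.trace_add, Matrix.trace_smul, smul_eq_mul]
      ring
    rw [hf, deriv_quad]
    rw [Matrix.smul_mul, Matrix.trace_smul, Matrix.trace_mul_comm X M]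
    simp only [smul_eq_mul]; ring
  · intro M X
    have hf : (fun t : ℝ =>
        Matrix.trace ((M + t • X) ^ 2 * A + (M + t • X) * A * (M + t • X)
          + A * (M + t • X) ^ 2)) =
        fun t : ℝ =>
          Matrix.trace (M * M * A + M * A * M + A * (M * M)) +
          (Matrix.trace (M * X * A) + Matrix.trace (X * M * A) +
           Matrix.trace (M * A * X) + Matrix.trace (X * A * M) +
           Matrix.trace (A * (M * X)) + Matrix.trace (A * (X * M))) * t +
          (Matrix.trace (X * X * A) + Matrix.trace (X * A * X) +
           Matrix.trace (A * (X * X))) * t ^ 2 := by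
      funext t
      simp only [pow_two, add_mul, mul_add, Matrix.smul_mul, Matrix.mul_smul,
        smul_smul, Matrix.trace_add, Matrix.trace_smul, smul_eq_mul]
      ring
    rw [hf, deriv_quad]
    rw [Matrix.smul_mul, Matrix.trace_smul]
    rw [Matrix.trace_mul_cycle X M A, Matrix.trace_mul_cycle X A M,
        Matrix.trace_mul_comm A (M * X), Matrix.trace_mul_comm A (X * M),
        Matrix.trace_mul_cycle X M A]
    simp only [add_mul, Matrix.trace_add, smul_eq_mul, mul_assoc]
    ring_nf
    have c1 : Matrix.trace (M * (X * A)) = Matrix.trace (A * (M * X)) := by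
      rw [← mul_assoc, ← mul_assoc, Matrix.trace_mul_cycle]
    have c2 : Matrix.trace (A * (X * M)) = Matrix.trace (M * (A * X)) := by
      rw [← mul_assoc, ← mul_assoc, Matrix.trace_mul_cycle]
    rw [c1, c2]; ring
  · intro M _
    have key : Matrix.trace (M * (M * (M * A + A * M)) )
        = Matrix.trace (M * ((M * A + A * M) * M)) := by
      rw [← mul_assoc, ← mul_assoc]
      exact (Matrix.trace_mul_cycle M (M * A + A * M) M).symm
    simp only [Matrix.smul_mul, Matrix.mul_smul, smul_smul]
    rw [Matrix.mul_sub, Matrix.trace_sub]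
    simp only [Matrix.mul_smul, Matrix.trace_smul, smul_eq_mul]
    rw [show ((-4:ℝ) * -6) = (-6:ℝ) * -4 by ring] at *
    have : Matrix.trace (M * (M * (M * A + A * M)))
        - Matrix.trace (M * ((M * A + A * M) * M)) = 0 := by rw [key]; ring
    nlinarith [this]
end

section
/- For M₀ = Σᵢ Eᵢ∧Eᵢ₊₁ (the skew-symmetric tridiagonal matrix with (M₀)_{i,i+1} = 1, (M₀)_{i+1,i} = -1) in so(n), the matrix M₀ is a regular element of so(n): its centralizer in so(n) has dimension ⌊n/2⌋. -/
open Matrix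

/-- The skew-symmetric tridiagonal matrix `M₀ = Σᵢ Eᵢ ∧ Eᵢ₊₁`, with entries `+1` on the
first superdiagonal and `-1` on the first subdiagonal. -/
def M0 (n : ℕ) : Matrix (Fin n) (Fin n) ℝ :=
  Matrix.of fun i j =>
    if (i : ℕ) + 1 = (j : ℕ) then 1 else if (j : ℕ) + 1 = (i : ℕ) then -1 else 0

/-- The centralizer of `M₀` inside `so(n)`, as a subspace. -/
def soCentralizerM0 (n : ℕ) : Submodule ℝ (Matrix (Fin n) (Fin n) ℝ) where
  carrier := {X | Xᵀ = -X ∧ X * M0 n = M0 n * X}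
  zero_mem' := by constructor <;> simp
  add_mem' := by
    rintro x y ⟨hx1, hx2⟩ ⟨hy1, hy2⟩
    refine ⟨?_, ?_⟩
    · rw [Matrix.transpose_add, hx1, hy1]; abel
    · rw [add_mul, mul_add, hx2, hy2]
  smul_mem' := by
    rintro c x ⟨h1, h2⟩
    refine ⟨?_, ?_⟩
    · rw [Matrix.transpose_smul, h1, smul_neg]
    · rw [Matrix.smul_mul, Matrix.mul_smul, h2]


/-- Zero-extended entry function of a matrix, with `ℤ` indices. -/
noncomputable def ent (n : ℕ) (A : Matrix (Fin n) (Fin n) ℝ) (i j : ℤ) : ℝ :=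
  if h : 0 ≤ i ∧ i < n ∧ 0 ≤ j ∧ j < n then
    A ⟨i.toNat, by omega⟩ ⟨j.toNat, by omega⟩ else 0

lemma ent_eq {n : ℕ} (A : Matrix (Fin n) (Fin n) ℝ) (i j : Fin n) :
    ent n A (i : ℕ) (j : ℕ) = A i j := by
  have hi := i.isLt; have hj := j.isLt
  rw [ent, dif_pos]
  · congr <;> simp
  · refine ⟨by positivity, by exact_mod_cast hi, by positivity, by exact_mod_cast hj⟩

lemma sum_ite_coe {n : ℕ} (f : Fin n → ℝ) (c : ℤ) :
    (∑ k : Fin n, if (k : ℕ) = c then f k else 0)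
      = if h : 0 ≤ c ∧ c < n then f ⟨c.toNat, by omega⟩ else 0 := by
  by_cases h : 0 ≤ c ∧ c < (n : ℤ)
  · rw [dif_pos h, Finset.sum_eq_single (⟨c.toNat, by omega⟩ : Fin n)]
    · rw [if_pos (by simp; omega)]
    · intro k _ hk
      rw [if_neg]
      intro hc
      apply hk
      apply Fin.ext
      simp
      omega
    · intro h'; exact absurd (Finset.mem_univ _) h'
  · rw [dif_neg h]
    apply Finset.sum_eq_zero
    intro k _
    rw [if_neg]
    intro hc
    have := k.isLt
    omega

lemma M0_col {n : ℕ} (k j : Fin n) :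
    M0 n k j = (if ((k : ℕ) : ℤ) = ((j : ℕ) : ℤ) - 1 then (1:ℝ) else 0)
      - (if ((k : ℕ) : ℤ) = ((j : ℕ) : ℤ) + 1 then (1:ℝ) else 0) := by
  simp only [M0, of_apply]
  split_ifs <;> (try norm_num) <;> omega

lemma M0_row {n : ℕ} (i k : Fin n) :
    M0 n i k = (if ((k : ℕ) : ℤ) = ((i : ℕ) : ℤ) + 1 then (1:ℝ) else 0)
      - (if ((k : ℕ) : ℤ) = ((i : ℕ) : ℤ) - 1 then (1:ℝ) else 0) := by
  simp only [M0, of_apply]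
  split_ifs <;> (try norm_num) <;> omega

lemma ent_mul_M0 {n : ℕ} (A : Matrix (Fin n) (Fin n) ℝ) {i j : ℤ}
    (hi0 : 0 ≤ i) (hin : i < n) (hj0 : 0 ≤ j) (hjn : j < n) :
    ent n (A * M0 n) i j = ent n A i (j - 1) - ent n A i (j + 1) := by
  set i' : Fin n := ⟨i.toNat, by omega⟩
  set j' : Fin n := ⟨j.toNat, by omega⟩
  have h1 : ent n (A * M0 n) i j = (A * M0 n) i' j' := by
    rw [ent, dif_pos ⟨hi0, hin, hj0, hjn⟩]
  rw [h1, Matrix.mul_apply]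
  have h2 : ∀ k : Fin n, A i' k * M0 n k j'
      = (if (k:ℕ) = j - 1 then A i' k else 0) - (if (k:ℕ) = j + 1 then A i' k else 0) := by
    intro k
    rw [M0_col]
    have e1 : (((k:ℕ):ℤ) = ((j':ℕ):ℤ) - 1) = (((k:ℕ):ℤ) = j - 1) := by
      simp only [eq_iff_iff, j']
      omega
    have e2 : (((k:ℕ):ℤ) = ((j':ℕ):ℤ) + 1) = (((k:ℕ):ℤ) = j + 1) := by
      simp only [eq_iff_iff, j']
      omega
    simp only [e1, e2]
    split_ifs <;> ring
  rw [Finset.sum_congr rfl (fun k _ => h2 k), Finset.sum_sub_distrib,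
    sum_ite_coe, sum_ite_coe]
  congr 1
  · rw [ent]
    by_cases h : 0 ≤ j - 1 ∧ j - 1 < (n:ℤ)
    · rw [dif_pos h, dif_pos ⟨hi0, hin, h.1, h.2⟩]
      try (congr 1 <;> simp [i'])
    · rw [dif_neg h, dif_neg (by tauto)]
  · rw [ent]
    by_cases h : 0 ≤ j + 1 ∧ j + 1 < (n:ℤ)
    · rw [dif_pos h, dif_pos ⟨hi0, hin, h.1, h.2⟩]
      try (congr 1 <;> simp [i'])
    · rw [dif_neg h, dif_neg (by tauto)]

lemma ent_M0_mul {n : ℕ} (A : Matrix (Fin n) (Fin n) ℝ) {i j : ℤ}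
    (hi0 : 0 ≤ i) (hin : i < n) (hj0 : 0 ≤ j) (hjn : j < n) :
    ent n (M0 n * A) i j = ent n A (i + 1) j - ent n A (i - 1) j := by
  set i' : Fin n := ⟨i.toNat, by omega⟩
  set j' : Fin n := ⟨j.toNat, by omega⟩
  have h1 : ent n (M0 n * A) i j = (M0 n * A) i' j' := by
    rw [ent, dif_pos ⟨hi0, hin, hj0, hjn⟩]
  rw [h1, Matrix.mul_apply]
  have h2 : ∀ k : Fin n, M0 n i' k * A k j'
      = (if (k:ℕ) = i + 1 then A k j' else 0) - (if (k:ℕ) = i - 1 then A k j' else 0) := by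
    intro k
    rw [M0_row]
    have e1 : (((k:ℕ):ℤ) = ((i':ℕ):ℤ) + 1) = (((k:ℕ):ℤ) = i + 1) := by
      simp only [eq_iff_iff, i']
      omega
    have e2 : (((k:ℕ):ℤ) = ((i':ℕ):ℤ) - 1) = (((k:ℕ):ℤ) = i - 1) := by
      simp only [eq_iff_iff, i']
      omega
    simp only [e1, e2]
    split_ifs <;> ring
  rw [Finset.sum_congr rfl (fun k _ => h2 k), Finset.sum_sub_distrib,
    sum_ite_coe, sum_ite_coe]
  congr 1
  · rw [ent]
    by_cases h : 0 ≤ i + 1 ∧ i + 1 < (n:ℤ)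
    · rw [dif_pos h, dif_pos ⟨h.1, h.2, hj0, hjn⟩]
      try (congr 1 <;> simp [j'])
    · rw [dif_neg h, dif_neg (by tauto)]
  · rw [ent]
    by_cases h : 0 ≤ i - 1 ∧ i - 1 < (n:ℤ)
    · rw [dif_pos h, dif_pos ⟨h.1, h.2, hj0, hjn⟩]
      try (congr 1 <;> simp [j'])
    · rw [dif_neg h, dif_neg (by tauto)]

/-- A matrix commuting with `M0` whose first column vanishes is zero. -/
lemma eq_zero_of_comm_of_col0 {n : ℕ} (A : Matrix (Fin n) (Fin n) ℝ)
    (hA : A * M0 n = M0 n * A) (h0 : ∀ i : ℤ, ent n A i 0 = 0) : A = 0 := by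
  suffices h : ∀ j : ℕ, ∀ i : ℤ, ent n A i (j : ℤ) = 0 by
    ext i j
    have := h (j : ℕ) ((i : ℕ) : ℤ)
    rw [ent_eq] at this
    simpa using this
  intro j
  induction j using Nat.strong_induction_on with
  | _ j IH =>
    intro i
    by_cases hjn : (j : ℤ) < n
    · rcases Nat.eq_zero_or_pos j with hj0 | hj1
      · subst hj0; exact h0 i
      · by_cases hi : 0 ≤ i ∧ i < (n : ℤ)
        · -- use the commutation relation at (i, j-1)
          have hjm0 : (0:ℤ) ≤ (j:ℤ) - 1 := by omega
          have hjmn : (j:ℤ) - 1 < n := by omega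
          have rel : ent n (A * M0 n) i ((j:ℤ)-1) = ent n (M0 n * A) i ((j:ℤ)-1) := by
            rw [hA]
          rw [ent_mul_M0 A hi.1 hi.2 hjm0 hjmn, ent_M0_mul A hi.1 hi.2 hjm0 hjmn] at rel
          have e1 : ent n A (i+1) ((j:ℤ)-1) = 0 := by
            have := IH (j-1) (by omega) (i+1)
            rwa [show (((j-1:ℕ)):ℤ) = (j:ℤ)-1 by omega] at this
          have e2 : ent n A (i-1) ((j:ℤ)-1) = 0 := by
            have := IH (j-1) (by omega) (i-1)
            rwa [show (((j-1:ℕ)):ℤ) = (j:ℤ)-1 by omega] at this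
          have e3 : ent n A i ((j:ℤ)-1-1) = 0 := by
            rcases Nat.lt_or_ge j 2 with h2 | h2
            · have hj : j = 1 := by omega
              subst hj
              rw [ent, dif_neg (by omega)]
            · have := IH (j-2) (by omega) i
              rwa [show (((j-2:ℕ)):ℤ) = (j:ℤ)-1-1 by omega] at this
          rw [e1, e2, e3] at rel
          have : ent n A i ((j:ℤ)-1+1) = 0 := by linarith
          rwa [show (j:ℤ)-1+1 = (j:ℤ) by ring] at this
        · rw [ent, dif_neg (by omega)]
    · rw [ent, dif_neg (by omega)]

/-- The first column of `M0^p` is "triangular". -/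
lemma pow_col {n : ℕ} (hn : 0 < n) (p : ℕ) :
    (∀ i : ℤ, (p : ℤ) < i → ent n (M0 n ^ p) i 0 = 0) ∧
    ((p : ℤ) < n → ent n (M0 n ^ p) (p : ℤ) 0 = (-1)^p) := by
  induction p with
  | zero =>
    constructor
    · intro i hi
      rw [ent]
      by_cases h : 0 ≤ i ∧ i < (n:ℤ) ∧ 0 ≤ (0:ℤ) ∧ (0:ℤ) < (n:ℤ)
      · rw [dif_pos h, pow_zero, Matrix.one_apply_ne]
        intro hc
        have := congrArg Fin.val hc
        simp at this
        omega
      · rw [dif_neg h]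
    · intro _
      rw [ent, dif_pos ⟨le_refl 0, by exact_mod_cast hn, le_refl 0, by exact_mod_cast hn⟩,
        pow_zero, pow_zero]
      exact Matrix.one_apply_eq _
  | succ p IH =>
    have hsucc : M0 n ^ (p+1) = M0 n * M0 n ^ p := by rw [pow_succ']
    constructor
    · intro i hi
      by_cases hiin : 0 ≤ i ∧ i < (n:ℤ)
      · rw [hsucc, ent_M0_mul _ hiin.1 hiin.2 (le_refl 0) (by exact_mod_cast hn),
          IH.1 (i+1) (by omega), IH.1 (i-1) (by omega), sub_zero]
      · rw [ent, dif_neg (by omega)]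
    · intro hpn
      have g1 : ((p+1:ℕ):ℤ) + 1 = ((p:ℤ)+2) := by push_cast; ring
      have g2 : ((p+1:ℕ):ℤ) - 1 = (p:ℤ) := by push_cast; ring
      rw [hsucc, ent_M0_mul _ (by positivity) (by exact_mod_cast hpn)
        (le_refl 0) (by exact_mod_cast hn), g1, g2,
        IH.1 ((p:ℤ)+2) (by omega), IH.2 (by omega)]
      ring

section Span
variable {n : ℕ} (hn : 0 < n)

/-- The matrix whose `p`-th column is the first column of `M0^p`. -/
noncomputable def Amat (hn : 0 < n) : Matrix (Fin n) (Fin n) ℝ :=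
  Matrix.of fun i p : Fin n => (M0 n ^ (p : ℕ)) i ⟨0, hn⟩

lemma ent_pow_eq (B : Matrix (Fin n) (Fin n) ℝ) (i : Fin n) :
    ent n B ((i : ℕ) : ℤ) 0 = B i ⟨0, hn⟩ := by
  have h := ent_eq B i ⟨0, hn⟩
  simpa using h

lemma Amat_triangular : (Amat hn).BlockTriangular id := by
  intro i p h
  simp only [id_eq] at h
  have h2 := (pow_col hn (p : ℕ)).1 ((i : ℕ) : ℤ) (by exact_mod_cast h)
  rw [ent_pow_eq hn] at h2
  exact h2

lemma Amat_diag (i : Fin n) : Amat hn i i = (-1 : ℝ) ^ (i : ℕ) := by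
  have h2 := (pow_col hn (i : ℕ)).2 (by exact_mod_cast i.isLt)
  rw [ent_pow_eq hn] at h2
  exact h2

lemma Amat_isUnit : IsUnit (Amat hn) := by
  rw [Matrix.isUnit_iff_isUnit_det, Matrix.det_of_upperTriangular (Amat_triangular hn)]
  rw [isUnit_iff_ne_zero]
  apply Finset.prod_ne_zero_iff.2
  intro i _
  rw [Amat_diag hn]
  positivity

/-- Extracting the first column, as a linear map. -/
noncomputable def colMap (hn : 0 < n) : Matrix (Fin n) (Fin n) ℝ →ₗ[ℝ] (Fin n → ℝ) where
  toFun X := fun i => X i ⟨0, hn⟩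
  map_add' X Y := rfl
  map_smul' c X := rfl

lemma powers_linearIndependent (hn : 0 < n) :
    LinearIndependent ℝ (fun p : Fin n => M0 n ^ (p : ℕ)) := by
  apply LinearIndependent.of_comp (colMap hn)
  have : (⇑(colMap hn) ∘ fun p : Fin n => M0 n ^ (p : ℕ)) = fun p => (Amat hn)ᵀ p := rfl
  rw [this]
  exact Matrix.linearIndependent_cols_iff_isUnit.2 (Amat_isUnit hn)

lemma mem_span_powers (hn : 0 < n) (X : Matrix (Fin n) (Fin n) ℝ) (hX : X * M0 n = M0 n * X) :
    X ∈ Submodule.span ℝ (Set.range fun p : Fin n => M0 n ^ (p : ℕ)) := by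
  obtain ⟨c, hc⟩ := (Matrix.mulVec_surjective_iff_isUnit.mpr (Amat_isUnit hn))
    (fun i => X i ⟨0, hn⟩)
  set Y := ∑ p : Fin n, c p • M0 n ^ (p : ℕ) with hY
  have hYmem : Y ∈ Submodule.span ℝ (Set.range fun p : Fin n => M0 n ^ (p : ℕ)) := by
    apply Submodule.sum_mem
    intro p _
    exact Submodule.smul_mem _ _ (Submodule.subset_span ⟨p, rfl⟩)
  have hYcomm : Y * M0 n = M0 n * Y := by
    rw [hY, Finset.sum_mul, Finset.mul_sum]
    congr 1
    ext p
    rw [smul_mul_assoc, mul_smul_comm, pow_mul_comm']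
  have hXY : X - Y = 0 := by
    apply eq_zero_of_comm_of_col0 _ (by rw [sub_mul, mul_sub, hX, hYcomm])
    intro i
    rw [ent]
    by_cases h : 0 ≤ i ∧ i < (n:ℤ) ∧ 0 ≤ (0:ℤ) ∧ (0:ℤ) < (n:ℤ)
    · rw [dif_pos h]
      set i' : Fin n := ⟨i.toNat, by omega⟩
      have hz : (⟨(0:ℤ).toNat, by omega⟩ : Fin n) = ⟨0, hn⟩ := rfl
      rw [hz]
      have h1 : Y i' ⟨0, hn⟩ = (Amat hn).mulVec c i' := by
        rw [hY, Matrix.mulVec, dotProduct]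
        simp only [Matrix.sum_apply, Matrix.smul_apply, smul_eq_mul]
        congr 1
        ext p
        rw [Amat]
        ring_nf
        rfl
      rw [Matrix.sub_apply, h1, hc]
      ring
    · rw [dif_neg h]
  have : X = Y := by
    have := sub_eq_zero.mp hXY
    exact this
  rw [this]
  exact hYmem

end Span

lemma M0_transpose (n : ℕ) : (M0 n)ᵀ = -(M0 n) := by
  ext i j
  simp only [Matrix.transpose_apply, Matrix.neg_apply, M0, Matrix.of_apply]
  split_ifs <;> (try norm_num) <;> omega

/-- `M₀` is a regular element of `so(n)`: its centralizer in `so(n)` has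
dimension `⌊n/2⌋`, the rank of `so(n)`. -/
theorem M0_is_regular (n : ℕ) :
    Module.finrank ℝ (soCentralizerM0 n) = n / 2 := by
  rcases Nat.eq_zero_or_pos n with hn0 | hn
  · subst hn0
    have hbot : soCentralizerM0 0 = ⊥ := by
      apply le_antisymm _ bot_le
      intro X _
      have : X = 0 := Subsingleton.elim X 0
      simp [this]
    rw [hbot, finrank_bot]
  · set w : Fin (n/2) → Matrix (Fin n) (Fin n) ℝ := fun k => M0 n ^ (2*(k:ℕ)+1) with hw
    have hpowind := powers_linearIndependent hn
    have hwind : LinearIndependent ℝ w := by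
      have heq : w = (fun p : Fin n => M0 n ^ (p:ℕ)) ∘
          (fun k : Fin (n/2) => (⟨2*(k:ℕ)+1, by omega⟩ : Fin n)) := rfl
      rw [heq]
      exact hpowind.comp _ (fun a b hab => by
        simp only [Fin.mk.injEq] at hab
        exact Fin.ext (by omega))
    have hle : soCentralizerM0 n ≤ Submodule.span ℝ (Set.range w) := by
      rintro X ⟨hskew, hcomm⟩
      obtain ⟨c, hc⟩ := (Submodule.mem_span_range_iff_exists_fun ℝ).mp
        (mem_span_powers hn X hcomm)
      have hXT : Xᵀ = ∑ p : Fin n, ((-1:ℝ)^(p:ℕ) * c p) • M0 n ^ (p:ℕ) := by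
        rw [← hc, Matrix.transpose_sum]
        congr 1
        ext p
        rw [Matrix.transpose_smul, Matrix.transpose_pow, M0_transpose,
          show -(M0 n) = (-1:ℝ) • M0 n by simp, smul_pow, smul_smul, mul_comm (c p)]
      have hnegX : -X = ∑ p : Fin n, (-(c p)) • M0 n ^ (p:ℕ) := by
        rw [← hc, ← Finset.sum_neg_distrib]
        congr 1
        ext p
        rw [neg_smul]
      have hzero : ∑ p : Fin n, ((-1:ℝ)^(p:ℕ) * c p + c p) • M0 n ^ (p:ℕ) = 0 := by
        have := hskew
        rw [hXT, hnegX] at this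
        have h2 : ∑ p : Fin n, (((-1:ℝ)^(p:ℕ) * c p) • M0 n ^ (p:ℕ)
            - (-(c p)) • M0 n ^ (p:ℕ)) = 0 := by
          rw [Finset.sum_sub_distrib, this, sub_self]
        rw [← h2]
        congr 1
        ext p
        rw [← sub_smul]
        congr 1
        ring
      have hcoeff : ∀ p : Fin n, (-1:ℝ)^(p:ℕ) * c p + c p = 0 :=
        Fintype.linearIndependent_iff.mp hpowind _ hzero
      have heven : ∀ p : Fin n, Even (p:ℕ) → c p = 0 := by
        intro p hp
        have := hcoeff p
        rw [hp.neg_one_pow] at this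
        linarith
      rw [← hc]
      apply Submodule.sum_mem
      intro p _
      rcases Nat.even_or_odd (p:ℕ) with hp | hp
      · rw [heven p hp, zero_smul]
        exact Submodule.zero_mem _
      · obtain ⟨k, hk⟩ := hp
        have hkn : k < n/2 := by have := p.isLt; omega
        apply Submodule.smul_mem
        apply Submodule.subset_span
        exact ⟨⟨k, hkn⟩, by simp [hw]; congr 1; omega⟩
    have hge : Submodule.span ℝ (Set.range w) ≤ soCentralizerM0 n := by
      rw [Submodule.span_le]
      rintro _ ⟨k, rfl⟩
      refine ⟨?_, ?_⟩
      · rw [hw]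
        simp only
        rw [Matrix.transpose_pow, M0_transpose]
        exact Odd.neg_pow ⟨(k:ℕ), by omega⟩ _
      · exact (pow_mul_comm' _ _)
    have heq2 : soCentralizerM0 n = Submodule.span ℝ (Set.range w) := le_antisymm hle hge
    rw [heq2, finrank_span_eq_card hwind, Fintype.card_fin]
end

section
/- Let M₀ = Σᵢ Eᵢ∧Eᵢ₊₁ ∈ so(n) and A = diag(a₁,…,aₙ). The component of the Hamiltonian vector field Q¹₂(M₀) = [M₀, P¹₂(M₀)] along Eᵢ∧Eᵢ₊₂, where P¹₂(M) = MA² + AMA + A²M, equals (aᵢ₊₂ - aᵢ)(aᵢ + aᵢ₊₁ + aᵢ₊₂). -/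
open Matrix

/-- The elementary skew-symmetric matrix `Eᵢ ∧ Eⱼ`: entry `+1` at `(i,j)` and
`-1` at `(j,i)`. -/
def wedge (n : ℕ) (i j : Fin n) : Matrix (Fin n) (Fin n) ℝ :=
  Matrix.single i j 1 - Matrix.single j i 1

/-- The gradient-type expression `P¹₂(M) = MA² + AMA + A²M`. -/
def P12 (n : ℕ) (a : Fin n → ℝ) : Matrix (Fin n) (Fin n) ℝ :=
  M0 n * Matrix.diagonal a * Matrix.diagonal a
    + Matrix.diagonal a * M0 n * Matrix.diagonal a
    + Matrix.diagonal a * Matrix.diagonal a * M0 n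

/-! Both `M₀` and `P¹₂(M₀)` vanish off the first sub- and superdiagonal, since conjugating
by the diagonal `A` only rescales entries: `P¹₂(M₀)ᵢⱼ = (M₀)ᵢⱼ (aᵢ² + aᵢaⱼ + aⱼ²)`. Hence
the entries `(i, i+2)` and `(i+2, i)` of `M₀P` and `PM₀` each come from the single path
through `i+1`, and the component along `Eᵢ ∧ Eᵢ₊₂` is
`(aᵢ₊₁² + aᵢ₊₁aᵢ₊₂ + aᵢ₊₂²) - (aᵢ² + aᵢaᵢ₊₁ + aᵢ₊₁²)`. -/

def IsNeighbourSupported {n : ℕ} {α : Type*} [Zero α] (X : Matrix (Fin n) (Fin n) α) : Prop :=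
  ∀ p q : Fin n, (p : ℕ) + 1 ≠ q → (q : ℕ) + 1 ≠ p → X p q = 0

section NeighbourSupported

variable {n : ℕ} {α : Type*} [NonUnitalNonAssocSemiring α] {X Y : Matrix (Fin n) (Fin n) α}

theorem IsNeighbourSupported.mul_apply_of_succ_of_succ (hX : IsNeighbourSupported X)
    (hY : IsNeighbourSupported Y) {p q r : Fin n} (hpq : (p : ℕ) + 1 = q) (hqr : (q : ℕ) + 1 = r) :
    (X * Y) p r = X p q * Y q r := by
  rw [mul_apply, Finset.sum_eq_single q]
  · intro k _ hkq
    have hkq : (k : ℕ) ≠ q := Fin.val_ne_of_ne hkq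
    by_cases hpk : (p : ℕ) + 1 = k ∨ (k : ℕ) + 1 = p
    · rw [hY k r (by omega) (by omega), mul_zero]
    · rw [hX p k (by omega) (by omega), zero_mul]
  · simp

theorem IsNeighbourSupported.mul_apply_of_succ_of_succ' (hX : IsNeighbourSupported X)
    (hY : IsNeighbourSupported Y) {p q r : Fin n} (hpq : (p : ℕ) + 1 = q) (hqr : (q : ℕ) + 1 = r) :
    (X * Y) r p = X r q * Y q p := by
  rw [mul_apply, Finset.sum_eq_single q]
  · intro k _ hkq
    have hkq : (k : ℕ) ≠ q := Fin.val_ne_of_ne hkq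
    by_cases hrk : (r : ℕ) + 1 = k ∨ (k : ℕ) + 1 = r
    · rw [hY k p (by omega) (by omega), mul_zero]
    · rw [hX r k (by omega) (by omega), zero_mul]
  · simp

end NeighbourSupported

theorem trace_mul_wedge {n : ℕ} (X : Matrix (Fin n) (Fin n) ℝ) (p q : Fin n) :
    trace (X * wedge n p q) = X q p - X p q := by
  simp [wedge, Matrix.mul_sub, trace_mul_single]

theorem M0_apply_of_succ {n : ℕ} {p q : Fin n} (h : (p : ℕ) + 1 = q) : M0 n p q = 1 := by
  simp [M0, h]

theorem M0_apply_of_succ' {n : ℕ} {p q : Fin n} (h : (p : ℕ) + 1 = q) : M0 n q p = -1 := by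
  simp [M0, h, show (q : ℕ) + 1 ≠ p by omega]

theorem isNeighbourSupported_M0 (n : ℕ) : IsNeighbourSupported (M0 n) := by
  intro p q hpq hqp
  simp [M0, hpq, hqp]

theorem P12_apply (n : ℕ) (a : Fin n → ℝ) (p q : Fin n) :
    P12 n a p q = M0 n p q * (a p ^ 2 + a p * a q + a q ^ 2) := by
  simp only [P12, Matrix.add_apply, mul_diagonal, diagonal_mul, diagonal_mul_diagonal]
  ring

theorem isNeighbourSupported_P12 (n : ℕ) (a : Fin n → ℝ) : IsNeighbourSupported (P12 n a) := by
  intro p q hpq hqp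
  rw [P12_apply, isNeighbourSupported_M0 n p q hpq hqp, zero_mul]

/-- With `A = diag(a₁,…,aₙ)` and `P¹₂(M) = MA² + AMA + A²M`, the component of
`Q¹₂(M₀) = [M₀, P¹₂(M₀)]` along `Eᵢ ∧ Eᵢ₊₂` with respect to the pairing
`⟨X,Y⟩ = -½tr(XY)` equals `(aᵢ₊₂ - aᵢ)(aᵢ + aᵢ₊₁ + aᵢ₊₂)`. -/
theorem component_Q12 (n : ℕ) (a : Fin n → ℝ) (i : ℕ) (h : i + 2 < n) :
    -(1 / 2 : ℝ) * Matrix.trace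
      ((M0 n * P12 n a - P12 n a * M0 n) * wedge n ⟨i, by omega⟩ ⟨i + 2, h⟩) =
      (a ⟨i + 2, h⟩ - a ⟨i, by omega⟩) *
        (a ⟨i, by omega⟩ + a ⟨i + 1, by omega⟩ + a ⟨i + 2, h⟩) := by
  set p : Fin n := ⟨i, by omega⟩
  set q : Fin n := ⟨i + 1, by omega⟩
  set r : Fin n := ⟨i + 2, h⟩
  have hpq : (p : ℕ) + 1 = q := rfl
  have hqr : (q : ℕ) + 1 = r := rfl
  have hM := isNeighbourSupported_M0 n
  have hP := isNeighbourSupported_P12 n a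
  rw [trace_mul_wedge, Matrix.sub_apply, Matrix.sub_apply,
    hM.mul_apply_of_succ_of_succ hP hpq hqr, hP.mul_apply_of_succ_of_succ hM hpq hqr,
    hM.mul_apply_of_succ_of_succ' hP hpq hqr, hP.mul_apply_of_succ_of_succ' hM hpq hqr,
    P12_apply, P12_apply, P12_apply, P12_apply, M0_apply_of_succ hpq, M0_apply_of_succ hqr,
    M0_apply_of_succ' hpq, M0_apply_of_succ' hqr]
  ring
end
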